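/- The Segal–Bargmann transform of level k maps Hermite functions to quaternionic Hermite polynomials: for all j, k ∈ ℕ and every q ∈ ℍ, π^{−3/4}·(2^k·k!)^{−1/2} · ∫_ℝ exp(−(t² + q²)/2 + √2·t·q) · H_k((q+q̄)/√2 − t) · h_j(t) dt = π^{−1/4}·2^{j/2}·(k!)^{−1/2} · H^Q_{j,k}(q,q̄). -/

import Mathlib

/-!
Every quaternion `q` lies in a copy of `ℂ`: there are an `ℝ`-algebra embedding `ι : ℂ → ℍ` and
`z : ℂ` with `ι z = q` and `ι z̄ = q̄`. Being continuous, `ι` commutes with `exp` and with the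
Bochner integral, so the statement reduces to the same integral over `ℂ`. There the integrand is
the Gaussian weight `exp(-t² + √2 z t - z²/2)` times the polynomial `H_k(a - t) H_j(t)`, where
`a = (z + z̄)/√2`. Integrating by parts against the weight gives the recursions
`I_{j+1,k} = √2 z I_{j,k} - 2k I_{j,k-1}` and `I_{0,k+1} = √2 z̄ I_{0,k}`, which up to the factor
`√π √2^{j+k}` are the recursions `H_{j+1,k} = z H_{j,k} - k H_{j,k-1}`, `H_{0,k} = z̄^k` of the
complex Hermite polynomials.
-/

open scoped Quaternion
open MeasureTheory

noncomputable section

/-- The quaternionic Hermite polynomial `H^Q_{m,n}(q,q̄)`. -/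
def HQ (m n : ℕ) (q qb : ℍ[ℝ]) : ℍ[ℝ] :=
  ((m.factorial : ℝ) * (n.factorial : ℝ)) •
    ∑ j ∈ Finset.range (min m n + 1),
      ((-1 : ℝ) ^ j / ((j.factorial : ℝ) * ((m - j).factorial : ℝ) * ((n - j).factorial : ℝ))) •
        (q ^ (m - j) * qb ^ (n - j))

/-- The `j`-th physicists' Hermite polynomial `H_j(t) = (−1)^j e^{t²} (d/dt)^j e^{−t²}`. -/
def physHermite (j : ℕ) (t : ℝ) : ℝ :=
  (-1 : ℝ) ^ j * Real.exp (t ^ 2) * iteratedDeriv j (fun s : ℝ => Real.exp (-s ^ 2)) t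

/-- The `j`-th Hermite function `h_j(t) = e^{−t²/2} H_j(t)`. -/
def hermiteFun (j : ℕ) (t : ℝ) : ℝ :=
  Real.exp (-t ^ 2 / 2) * physHermite j t

open Polynomial
open scoped ComplexConjugate

def physHermitePoly (R : Type*) [CommRing R] : ℕ → R[X]
  | 0 => 1
  | k + 1 => 2 * X * physHermitePoly R k - derivative (physHermitePoly R k)

section PhysHermitePoly

variable {R S : Type*} [CommRing R] [CommRing S]

@[simp]
lemma physHermitePoly_zero : physHermitePoly R 0 = 1 := rfl

lemma physHermitePoly_succ (k : ℕ) :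
    physHermitePoly R (k + 1) =
      2 * X * physHermitePoly R k - derivative (physHermitePoly R k) := rfl

lemma map_physHermitePoly (f : R →+* S) (k : ℕ) :
    (physHermitePoly R k).map f = physHermitePoly S k := by
  induction k with
  | zero => simp
  | succ k ih => simp [physHermitePoly_succ, ← ih, derivative_map]

lemma derivative_physHermitePoly_succ (k : ℕ) :
    derivative (physHermitePoly R (k + 1)) = 2 * (k + 1 : R[X]) * physHermitePoly R k := by
  induction k with
  | zero => simp [physHermitePoly_succ]
  | succ k ih =>
    rw [physHermitePoly_succ, derivative_sub, derivative_mul, derivative_mul, ih,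
      physHermitePoly_succ (k := k)]
    simp only [derivative_ofNat, derivative_X, derivative_mul, derivative_natCast,
      derivative_add, derivative_one]
    push_cast
    ring

lemma derivative_physHermitePoly (k : ℕ) :
    derivative (physHermitePoly R k) = 2 * (k : R[X]) * physHermitePoly R (k - 1) := by
  cases k with
  | zero => simp
  | succ k => simpa using derivative_physHermitePoly_succ k

end PhysHermitePoly

lemma iteratedDeriv_exp_neg_sq (k : ℕ) (t : ℝ) :
    iteratedDeriv k (fun s : ℝ => Real.exp (-s ^ 2)) t =
      (-1) ^ k * Real.exp (-t ^ 2) * (physHermitePoly ℝ k).eval t := by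
  induction k generalizing t with
  | zero => simp
  | succ k ih =>
    rw [iteratedDeriv_succ, funext ih]
    have hexp :
        HasDerivAt (fun s : ℝ => Real.exp (-s ^ 2)) (Real.exp (-t ^ 2) * (-(2 * t))) t := by
      simpa using ((hasDerivAt_pow 2 t).neg).exp
    rw [((hexp.const_mul ((-1 : ℝ) ^ k)).fun_mul ((physHermitePoly ℝ k).hasDerivAt t)).deriv,
      physHermitePoly_succ]
    simp only [eval_sub, eval_mul, eval_ofNat, eval_X]
    ring

lemma physHermite_eq_eval (k : ℕ) (t : ℝ) : physHermite k t = (physHermitePoly ℝ k).eval t := by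
  have hexp : Real.exp (t ^ 2) * Real.exp (-t ^ 2) = 1 := by rw [← Real.exp_add]; simp
  have hsign : ((-1 : ℝ) ^ k) ^ 2 = 1 := by rw [← pow_mul, pow_mul', neg_one_sq, one_pow]
  rw [physHermite, iteratedDeriv_exp_neg_sq]
  linear_combination (((-1) ^ k) ^ 2 * (physHermitePoly ℝ k).eval t) * hexp +
    (physHermitePoly ℝ k).eval t * hsign

lemma ofReal_physHermite (k : ℕ) (t : ℝ) :
    (physHermite k t : ℂ) = (physHermitePoly ℂ k).eval (t : ℂ) := by
  rw [physHermite_eq_eval, ← map_physHermitePoly (algebraMap ℝ ℂ), eval_map_algebraMap,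
    ← Complex.coe_algebraMap, aeval_algebraMap_apply, coe_aeval_eq_eval]

lemma integrable_pow_mul_cexp_quadratic (n : ℕ) (b c : ℂ) :
    Integrable fun t : ℝ => (t : ℂ) ^ n * Complex.exp (-(t : ℂ) ^ 2 + b * t + c) := by
  have hmoment : Integrable fun t : ℝ => t ^ n * Real.exp (-(1 / 2) * t ^ 2) := by
    simpa [Real.rpow_natCast] using integrable_rpow_mul_exp_neg_mul_sq (b := 1 / 2)
      (by norm_num) (s := n) (by linarith [n.cast_nonneg (α := ℝ)])
  refine (hmoment.norm.const_mul (Real.exp (c.re + b.re ^ 2 / 2))).mono'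
    (by fun_prop) (.of_forall fun t => ?_)
  -- completing the square: `-t² + βt ≤ -t²/2 + β²/2`
  have hsq : -t ^ 2 + b.re * t + c.re ≤ c.re + b.re ^ 2 / 2 + -(1 / 2) * t ^ 2 := by
    nlinarith [sq_nonneg (t - b.re)]
  have hre : (-(t : ℂ) ^ 2 + b * t + c).re = -t ^ 2 + b.re * t + c.re := by
    simp [← Complex.ofReal_pow, Complex.mul_re]
  calc ‖(t : ℂ) ^ n * Complex.exp (-(t : ℂ) ^ 2 + b * t + c)‖
      = ‖t‖ ^ n * Real.exp (-t ^ 2 + b.re * t + c.re) := by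
        rw [norm_mul, Complex.norm_exp, hre, norm_pow, Complex.norm_real]
    _ ≤ ‖t‖ ^ n * (Real.exp (c.re + b.re ^ 2 / 2) * Real.exp (-(1 / 2) * t ^ 2)) := by
        rw [← Real.exp_add]
        gcongr
    _ = Real.exp (c.re + b.re ^ 2 / 2) * ‖t ^ n * Real.exp (-(1 / 2) * t ^ 2)‖ := by
        rw [norm_mul, norm_pow, Real.norm_of_nonneg (Real.exp_pos _).le]
        ring

lemma integrable_cexp_quadratic_mul_eval (b c : ℂ) (W : ℂ[X]) :
    Integrable fun t : ℝ => Complex.exp (-(t : ℂ) ^ 2 + b * t + c) * W.eval (t : ℂ) := by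
  induction W using Polynomial.induction_on' with
  | add W V hW hV => simpa only [eval_add, mul_add] using hW.fun_add hV
  | monomial n a =>
    simpa only [eval_monomial, mul_left_comm _ a, mul_comm (Complex.exp _)] using
      (integrable_pow_mul_cexp_quadratic n b c).const_mul a

def gaussianPairing (b c : ℂ) : ℂ[X] →ₗ[ℂ] ℂ where
  toFun W := ∫ t : ℝ, Complex.exp (-(t : ℂ) ^ 2 + b * t + c) * W.eval (t : ℂ)
  map_add' W V := by
    simp only [eval_add, mul_add]
    exact integral_add (integrable_cexp_quadratic_mul_eval b c W)
      (integrable_cexp_quadratic_mul_eval b c V)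
  map_smul' a W := by
    simp only [eval_smul, smul_eq_mul, RingHom.id_apply, mul_left_comm _ a]
    exact integral_const_mul a _

section GaussianPairing

variable {b c : ℂ}

lemma gaussianPairing_apply (W : ℂ[X]) :
    gaussianPairing b c W =
      ∫ t : ℝ, Complex.exp (-(t : ℂ) ^ 2 + b * t + c) * W.eval (t : ℂ) := rfl

lemma gaussianPairing_C_mul (a : ℂ) (W : ℂ[X]) :
    gaussianPairing b c (C a * W) = a * gaussianPairing b c W := by
  rw [← smul_eq_C_mul, map_smul, smul_eq_mul]

lemma gaussianPairing_one :
    gaussianPairing b c 1 = Real.sqrt Real.pi * Complex.exp (c + b ^ 2 / 4) := by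
  have h := integral_cexp_quadratic (b := -1) (by norm_num) b c
  simp only [neg_mul, one_mul, neg_neg, div_one] at h
  rw [gaussianPairing_apply]
  simp only [eval_one, mul_one]
  rw [h, Real.sqrt_eq_rpow, Complex.ofReal_cpow Real.pi_pos.le]
  push_cast
  ring_nf

lemma gaussianPairing_ibp (W : ℂ[X]) :
    gaussianPairing b c ((C b - 2 * X) * W + derivative W) = 0 := by
  refine integral_eq_zero_of_hasDerivAt_of_integrable (fun t => ?_)
    (integrable_cexp_quadratic_mul_eval b c _) (integrable_cexp_quadratic_mul_eval b c W)
  have hquad : HasDerivAt (fun x : ℂ => -x ^ 2 + b * x + c) (-(2 * t) + b) (t : ℂ) := by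
    simpa using
      ((hasDerivAt_pow 2 (t : ℂ)).neg.add ((hasDerivAt_id' (t : ℂ)).const_mul b)).add_const c
  refine (hquad.cexp.fun_mul (W.hasDerivAt (t : ℂ))).comp_ofReal.congr_deriv ?_
  simp only [eval_add, eval_mul, eval_sub, eval_C, eval_ofNat, eval_X]
  ring

end GaussianPairing

def bivariateHermite {A : Type*} [Ring A] [Algebra ℝ A] (m n : ℕ) (z w : A) : A :=
  ((m.factorial : ℝ) * (n.factorial : ℝ)) •
    ∑ j ∈ Finset.range (min m n + 1),
      ((-1 : ℝ) ^ j / ((j.factorial : ℝ) * ((m - j).factorial : ℝ) * ((n - j).factorial : ℝ))) •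
        (z ^ (m - j) * w ^ (n - j))

lemma HQ_eq_bivariateHermite : HQ = bivariateHermite := rfl

lemma AlgHom.map_bivariateHermite {A B : Type*} [Ring A] [Algebra ℝ A] [Ring B] [Algebra ℝ B]
    (f : A →ₐ[ℝ] B) (m n : ℕ) (z w : A) :
    f (bivariateHermite m n z w) = bivariateHermite m n (f z) (f w) := by
  simp only [bivariateHermite, map_smul, map_sum, map_mul, map_pow]

def hermiteCoeff (m n i : ℕ) : ℤ := (-1) ^ i * i.factorial * m.choose i * n.choose i

@[simp]
lemma hermiteCoeff_zero (m n : ℕ) : hermiteCoeff m n 0 = 1 := by simp [hermiteCoeff]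

lemma hermiteCoeff_succ_succ (m n i : ℕ) :
    hermiteCoeff (m + 1) n (i + 1) = hermiteCoeff m n (i + 1) - n * hermiteCoeff m (n - 1) i := by
  cases n with
  | zero => simp [hermiteCoeff]
  | succ n =>
    have hpascal : ((m + 1).choose (i + 1) : ℤ) = m.choose i + m.choose (i + 1) := by
      exact_mod_cast Nat.choose_succ_succ' m i
    have habsorb : ((n : ℤ) + 1) * n.choose i = (n + 1).choose (i + 1) * (i + 1) := by
      exact_mod_cast Nat.add_one_mul_choose_eq n i
    simp only [hermiteCoeff, hpascal, Nat.factorial_succ, Nat.add_sub_cancel]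
    push_cast
    linear_combination (-1) ^ i * (i.factorial : ℤ) * m.choose i * habsorb

section CommRing

variable {A : Type*} [CommRing A] [Algebra ℝ A]

lemma bivariateHermite_eq_sum_hermiteCoeff (m n N : ℕ) (hN : min m n < N) (z w : A) :
    bivariateHermite m n z w =
      ∑ i ∈ Finset.range N, (hermiteCoeff m n i : A) * (z ^ (m - i) * w ^ (n - i)) := by
  have hvanish : ∀ i ∈ Finset.range N, i ∉ Finset.range (min m n + 1) →
      (hermiteCoeff m n i : A) * (z ^ (m - i) * w ^ (n - i)) = 0 := by
    intro i _ hi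
    rcases (show m < i ∨ n < i by simp only [Finset.mem_range] at hi; omega) with hi | hi <;>
      simp [hermiteCoeff, Nat.choose_eq_zero_of_lt hi]
  rw [← Finset.sum_subset (Finset.range_subset_range.2 hN) hvanish, bivariateHermite,
    Finset.smul_sum]
  refine Finset.sum_congr rfl fun i hi => ?_
  rw [Finset.mem_range] at hi
  have him : i ≤ m := by omega
  have hin : i ≤ n := by omega
  have hcoeff : (m.factorial : ℝ) * n.factorial *
      ((-1) ^ i / (i.factorial * (m - i).factorial * (n - i).factorial)) = hermiteCoeff m n i := by
    rw [hermiteCoeff, ← Nat.choose_mul_factorial_mul_factorial him,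
      ← Nat.choose_mul_factorial_mul_factorial hin]
    push_cast
    field_simp
  rw [smul_smul, hcoeff, Algebra.smul_def, map_intCast]

lemma bivariateHermite_zero_left (n : ℕ) (z w : A) : bivariateHermite 0 n z w = w ^ n := by
  simp [bivariateHermite_eq_sum_hermiteCoeff 0 n 1 (by omega)]

lemma bivariateHermite_succ_left (m n : ℕ) (z w : A) :
    bivariateHermite (m + 1) n z w =
      z * bivariateHermite m n z w - n * bivariateHermite m (n - 1) z w := by
  set N := m + n + 1
  -- `z * z ^ (m - (i + 1)) = z ^ (m - i)` fails for `i ≥ m`, but then the coefficient vanishes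
  have hterm (i : ℕ) :
      (hermiteCoeff (m + 1) n (i + 1) : A) * (z ^ (m + 1 - (i + 1)) * w ^ (n - (i + 1))) =
      z * ((hermiteCoeff m n (i + 1) : A) * (z ^ (m - (i + 1)) * w ^ (n - (i + 1)))) -
        n * ((hermiteCoeff m (n - 1) i : A) * (z ^ (m - i) * w ^ (n - 1 - i))) := by
    rw [hermiteCoeff_succ_succ, Nat.add_sub_add_right, show n - 1 - i = n - (i + 1) by omega]
    rcases lt_or_ge i m with him | him
    · rw [show m - i = m - (i + 1) + 1 by omega]
      push_cast
      ring
    · rw [hermiteCoeff, Nat.choose_eq_zero_of_lt (by omega : m < i + 1)]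
      push_cast
      ring
  rw [bivariateHermite_eq_sum_hermiteCoeff (m + 1) n (N + 1) (by omega),
    bivariateHermite_eq_sum_hermiteCoeff m n (N + 1) (by omega),
    bivariateHermite_eq_sum_hermiteCoeff m (n - 1) N (by omega),
    Finset.sum_range_succ' _ N, Finset.sum_range_succ' _ N,
    Finset.sum_congr rfl fun i _ => hterm i,
    Finset.sum_sub_distrib, ← Finset.mul_sum, ← Finset.mul_sum]
  simp only [hermiteCoeff_zero, Int.cast_one, one_mul, Nat.sub_zero, pow_succ]
  ring

end CommRing

section GaussianHermiteIntegral

variable (a b c : ℂ)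

lemma derivative_physHermitePoly_comp (k : ℕ) :
    derivative ((physHermitePoly ℂ k).comp (C a - X)) =
      -(2 * (k : ℂ[X]) * (physHermitePoly ℂ (k - 1)).comp (C a - X)) := by
  simp only [derivative_comp, derivative_physHermitePoly, derivative_sub, derivative_C,
    derivative_X, mul_comp, natCast_comp, ofNat_comp]
  ring

lemma physHermitePoly_succ_comp (k : ℕ) :
    (physHermitePoly ℂ (k + 1)).comp (C a - X) =
      2 * (C a - X) * (physHermitePoly ℂ k).comp (C a - X) +
        derivative ((physHermitePoly ℂ k).comp (C a - X)) := by
  simp only [physHermitePoly_succ, derivative_comp, sub_comp, mul_comp, ofNat_comp, X_comp,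
    derivative_sub, derivative_C, derivative_X]
  ring

def gaussianHermiteIntegral (j k : ℕ) : ℂ :=
  gaussianPairing b c ((physHermitePoly ℂ k).comp (C a - X) * physHermitePoly ℂ j)

lemma gaussianHermiteIntegral_zero_zero :
    gaussianHermiteIntegral a b c 0 0 = Real.sqrt Real.pi * Complex.exp (c + b ^ 2 / 4) := by
  simp [gaussianHermiteIntegral, gaussianPairing_one]

lemma gaussianHermiteIntegral_zero_succ (k : ℕ) :
    gaussianHermiteIntegral a b c 0 (k + 1) = (2 * a - b) * gaussianHermiteIntegral a b c 0 k := by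
  set W := (physHermitePoly ℂ k).comp (C a - X)
  have hpoly : (physHermitePoly ℂ (k + 1)).comp (C a - X) * physHermitePoly ℂ 0 =
      C (2 * a - b) * (W * physHermitePoly ℂ 0) + ((C b - 2 * X) * W + derivative W) := by
    rw [physHermitePoly_succ_comp, physHermitePoly_zero, C_sub, C_mul, C_ofNat]
    ring
  rw [gaussianHermiteIntegral, hpoly, map_add, gaussianPairing_C_mul, gaussianPairing_ibp,
    add_zero, gaussianHermiteIntegral]

lemma gaussianHermiteIntegral_succ_left (j k : ℕ) :
    gaussianHermiteIntegral a b c (j + 1) k =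
      b * gaussianHermiteIntegral a b c j k - 2 * k * gaussianHermiteIntegral a b c j (k - 1) := by
  set V := (physHermitePoly ℂ k).comp (C a - X) * physHermitePoly ℂ j
  have hpoly : (physHermitePoly ℂ k).comp (C a - X) * physHermitePoly ℂ (j + 1) =
      C b * V -
        C (2 * (k : ℂ)) * ((physHermitePoly ℂ (k - 1)).comp (C a - X) * physHermitePoly ℂ j) -
          ((C b - 2 * X) * V + derivative V) := by
    rw [physHermitePoly_succ, derivative_mul, derivative_physHermitePoly_comp, C_mul, C_ofNat,
      C_eq_natCast]
    ring
  rw [gaussianHermiteIntegral, hpoly, map_sub, map_sub, gaussianPairing_C_mul,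
    gaussianPairing_C_mul, gaussianPairing_ibp, sub_zero, gaussianHermiteIntegral,
    gaussianHermiteIntegral]

end GaussianHermiteIntegral

lemma gaussianHermiteIntegral_eq (z w c : ℂ) (j k : ℕ) :
    gaussianHermiteIntegral ((z + w) / Real.sqrt 2) (Real.sqrt 2 * z) c j k =
      Real.sqrt Real.pi * Complex.exp (c + z ^ 2 / 2) * (Real.sqrt 2 : ℂ) ^ (j + k) *
        bivariateHermite j k z w := by
  set s : ℂ := (Real.sqrt 2 : ℂ)
  have hs : s ^ 2 = 2 := by
    rw [← Complex.ofReal_pow, Real.sq_sqrt zero_le_two, Complex.ofReal_ofNat]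
  have hs0 : s ≠ 0 := by simp [s]
  induction j generalizing k with
  | zero =>
    induction k with
    | zero =>
      rw [gaussianHermiteIntegral_zero_zero, bivariateHermite_zero_left, mul_pow, hs]
      ring_nf
    | succ k ih =>
      have hshift : 2 * ((z + w) / s) - s * z = s * w := by
        field_simp
        linear_combination (-z - w) * hs
      rw [gaussianHermiteIntegral_zero_succ, ih, hshift, bivariateHermite_zero_left,
        bivariateHermite_zero_left]
      ring
  | succ j ih =>
    rw [gaussianHermiteIntegral_succ_left, ih, bivariateHermite_succ_left]
    cases k with
    | zero =>
      simp only [Nat.cast_zero, mul_zero, zero_mul, sub_zero, add_zero]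
      ring
    | succ k =>
      rw [ih, Nat.add_sub_cancel]
      push_cast
      linear_combination (Real.sqrt Real.pi * Complex.exp (c + z ^ 2 / 2) * s ^ (j + k) *
        (k + 1) * bivariateHermite j k z w) * hs

lemma Quaternion.exists_mul_self_eq_neg_one_and_smul_eq_im (q : ℍ[ℝ]) :
    ∃ u : ℍ[ℝ], u * u = -1 ∧ ‖q.im‖ • u = q.im := by
  by_cases h : q.im = 0
  · refine ⟨(Quaternion.equivTuple ℝ).symm ![0, 1, 0, 0], ?_, by rw [h, norm_zero, zero_smul]⟩
    ext <;> simp only [Quaternion.re_mul, Quaternion.imI_mul, Quaternion.imJ_mul,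
      Quaternion.imK_mul] <;> simp
  · have hn : ‖q.im‖ ≠ 0 := norm_ne_zero_iff.2 h
    refine ⟨‖q.im‖⁻¹ • q.im, ?_, by rw [smul_smul, mul_inv_cancel₀ hn, one_smul]⟩
    have hnorm : ‖q.im‖⁻¹ * ‖q.im‖⁻¹ * (‖q.im‖ * ‖q.im‖) = 1 := by field_simp
    rw [smul_mul_smul, ← sq q.im, Quaternion.im_sq, Quaternion.normSq_eq_norm_mul_self, smul_neg,
      Quaternion.smul_coe, hnorm, Quaternion.coe_one]

lemma Quaternion.exists_algHom_complex_apply_eq (q : ℍ[ℝ]) :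
    ∃ (ι : ℂ →ₐ[ℝ] ℍ[ℝ]) (z : ℂ), ι z = q ∧ ι (conj z) = star q := by
  obtain ⟨u, hu, hq⟩ := q.exists_mul_self_eq_neg_one_and_smul_eq_im
  refine ⟨Complex.liftAux u hu, ⟨q.re, ‖q.im‖⟩, ?_, ?_⟩
  · rw [Complex.liftAux_apply, hq, Quaternion.algebraMap_def, Quaternion.re_add_im]
  · conv_rhs => rw [← q.re_add_im]
    rw [Complex.liftAux_apply, Complex.conj_re, Complex.conj_im, neg_smul, hq,
      Quaternion.algebraMap_def, star_add, Quaternion.star_coe, Quaternion.star_im]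

section SegalBargmannIntegrand

variable {A : Type*} [NormedDivisionRing A] [NormedAlgebra ℝ A]

/-- `s` stands for `(q + q̄).re`, which has no meaning in a general normed algebra. -/
def segalBargmannIntegrand (j k : ℕ) (s : ℝ) (q : A) (t : ℝ) : A :=
  NormedSpace.exp (-(algebraMap ℝ A t ^ 2 + q ^ 2) / 2 + algebraMap ℝ A (Real.sqrt 2 * t) * q) *
    algebraMap ℝ A (physHermite k (s / Real.sqrt 2 - t)) * algebraMap ℝ A (hermiteFun j t)

lemma AlgHom.map_segalBargmannIntegrand [NormedAlgebra ℚ A] [CompleteSpace A] {B : Type*}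
    [NormedDivisionRing B] [NormedAlgebra ℝ B] [Algebra ℚ B] (f : A →ₐ[ℝ] B) (hf : Continuous f)
    (j k : ℕ) (s : ℝ) (q : A) (t : ℝ) :
    f (segalBargmannIntegrand j k s q t) = segalBargmannIntegrand j k s (f q) t := by
  simp only [segalBargmannIntegrand, map_mul, NormedSpace.map_exp f hf, map_add, map_div₀,
    map_neg, map_pow, AlgHom.commutes, map_ofNat]

end SegalBargmannIntegrand

lemma segalBargmannIntegrand_complex_eq (j k : ℕ) (z : ℂ) (t : ℝ) :
    segalBargmannIntegrand j k (z + conj z).re z t =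
      Complex.exp (-(t : ℂ) ^ 2 + Real.sqrt 2 * z * t + -z ^ 2 / 2) *
        ((physHermitePoly ℂ k).comp (C ((z + conj z) / Real.sqrt 2) - X) *
          physHermitePoly ℂ j).eval (t : ℂ) := by
  have hreal :
      (((z + conj z).re / Real.sqrt 2 - t : ℝ) : ℂ) = (z + conj z) / Real.sqrt 2 - t := by
    rw [Complex.add_re, Complex.conj_re, Complex.add_conj]
    push_cast
    ring
  simp only [segalBargmannIntegrand, hermiteFun, Complex.coe_algebraMap, ← Complex.exp_eq_exp_ℂ,
    Complex.ofReal_mul, Complex.ofReal_exp, ofReal_physHermite, hreal, eval_mul, eval_comp,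
    eval_sub, eval_C, eval_X]
  have hexp : Complex.exp (-((t : ℂ) ^ 2 + z ^ 2) / 2 + Real.sqrt 2 * t * z) *
      Complex.exp ((-t ^ 2 / 2 : ℝ) : ℂ) =
        Complex.exp (-(t : ℂ) ^ 2 + Real.sqrt 2 * z * t + -z ^ 2 / 2) := by
    rw [← Complex.exp_add]
    push_cast
    ring_nf
  rw [← hexp]
  ring

lemma integrable_segalBargmannIntegrand_complex (j k : ℕ) (z : ℂ) :
    Integrable (segalBargmannIntegrand j k (z + conj z).re z) := by
  rw [funext (segalBargmannIntegrand_complex_eq j k z)]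
  exact integrable_cexp_quadratic_mul_eval _ _ _

lemma integral_segalBargmannIntegrand_complex (j k : ℕ) (z : ℂ) :
    ∫ t, segalBargmannIntegrand j k (z + conj z).re z t =
      (Real.sqrt Real.pi * Real.sqrt 2 ^ (j + k)) • bivariateHermite j k z (conj z) := by
  simp_rw [segalBargmannIntegrand_complex_eq]
  rw [← gaussianPairing_apply, ← gaussianHermiteIntegral, gaussianHermiteIntegral_eq,
    neg_div, neg_add_cancel, Complex.exp_zero, Complex.real_smul]
  push_cast
  ring

lemma segalBargmann_constant (j k : ℕ) :
    Real.pi ^ (-(3 / 4) : ℝ) / Real.sqrt (2 ^ k * k.factorial) *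
        (Real.sqrt Real.pi * Real.sqrt 2 ^ (j + k)) =
      Real.pi ^ (-(1 / 4) : ℝ) * 2 ^ ((j : ℝ) / 2) / Real.sqrt k.factorial := by
  have hpi : Real.pi ^ (-(3 / 4) : ℝ) * Real.sqrt Real.pi = Real.pi ^ (-(1 / 4) : ℝ) := by
    rw [Real.sqrt_eq_rpow, ← Real.rpow_add Real.pi_pos]
    norm_num
  have hsqrt_pow (n : ℕ) : Real.sqrt 2 ^ n = 2 ^ ((n : ℝ) / 2) := by
    rw [Real.sqrt_eq_rpow, ← Real.rpow_natCast, ← Real.rpow_mul zero_le_two]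
    ring_nf
  have hsqrt_two_pow : Real.sqrt (2 ^ k) = 2 ^ ((k : ℝ) / 2) := by
    rw [Real.sqrt_eq_rpow, ← Real.rpow_natCast, ← Real.rpow_mul zero_le_two]
    ring_nf
  rw [Real.sqrt_mul (by positivity), hsqrt_two_pow, pow_add, hsqrt_pow, hsqrt_pow, ← hpi]
  field_simp

/-- the Segal–Bargmann transform of level `k` maps the Hermite function `h_j`
to the quaternionic Hermite polynomial `H^Q_{j,k}`:
`π^{−3/4}(2^k k!)^{−1/2} ∫_ℝ exp(−(t²+q²)/2+√2tq) H_k((q+q̄)/√2−t) h_j(t) dt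
  = π^{−1/4} 2^{j/2} (k!)^{−1/2} H^Q_{j,k}(q,q̄)`. -/
theorem stmt17 (j k : ℕ) (q : ℍ[ℝ]) :
    (Real.pi ^ (-(3 / 4) : ℝ) / Real.sqrt ((2 : ℝ) ^ k * (k.factorial : ℝ))) •
        ∫ t : ℝ,
          NormedSpace.exp
              (-(((t : ℝ) : ℍ[ℝ]) ^ 2 + q ^ 2) / 2 + ((Real.sqrt 2 * t : ℝ) : ℍ[ℝ]) * q) *
            ((physHermite k ((q + star q).re / Real.sqrt 2 - t) : ℝ) : ℍ[ℝ]) *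
            ((hermiteFun j t : ℝ) : ℍ[ℝ]) =
      (Real.pi ^ (-(1 / 4) : ℝ) * (2 : ℝ) ^ ((j : ℝ) / 2) / Real.sqrt (k.factorial : ℝ)) •
        HQ j k q (star q) := by
  obtain ⟨ι, z, rfl, hconj⟩ := q.exists_algHom_complex_apply_eq
  have hι : Continuous ι := ι.toLinearMap.continuous_of_finiteDimensional
  have hre : (ι z + star (ι z)).re = (z + conj z).re := by
    rw [← hconj, ← map_add, Complex.add_conj, ← Complex.coe_algebraMap, ι.commutes,
      Quaternion.algebraMap_def, Quaternion.re_coe, Complex.coe_algebraMap, Complex.ofReal_re]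
  have hintegral : ∫ t, segalBargmannIntegrand j k (z + conj z).re (ι z) t =
      ι (∫ t, segalBargmannIntegrand j k (z + conj z).re z t) := by
    simp_rw [← ι.map_segalBargmannIntegrand hι]
    exact (ContinuousLinearMap.integral_comp_comm ⟨ι.toLinearMap, hι⟩
      (integrable_segalBargmannIntegrand_complex j k z))
  change _ • ∫ t, segalBargmannIntegrand j k (ι z + star (ι z)).re (ι z) t = _
  rw [hre, hintegral, integral_segalBargmannIntegrand_complex, map_smul, ι.map_bivariateHermite,
    hconj, smul_smul, segalBargmann_constant, HQ_eq_bivariateHermite]
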